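/- Let f : ℤ² → ℤ³ be the linear map given by the matrix with rows (3, −1), (2, 2), (1, 1) (i.e. f(a,b) = (3a − b, 2a + 2b, a + b)). Then f is injective and the quotient ℤ³/image(f) is isomorphic as a ℤ-module to ℤ ⊕ ℤ/4. -/
import Mathlib

/-- Auxiliary linear map whose kernel is the range of `f`. -/
def gysinAux : (Fin 3 → ℤ) →ₗ[ℤ] ℤ × ZMod 4 where
  toFun v := (v 1 - 2 * v 2, ((v 0 + v 2 : ℤ) : ZMod 4))
  map_add' v w := by
    refine Prod.ext ?_ ?_ <;> simp <;> push_cast <;> ring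
  map_smul' c v := by
    refine Prod.ext ?_ ?_ <;> simp [zsmul_eq_mul] <;> push_cast <;> ring

theorem gysin_map_H2 :
    let f : (Fin 2 → ℤ) →ₗ[ℤ] (Fin 3 → ℤ) := Matrix.toLin' !![3, -1; 2, 2; 1, 1]
    Function.Injective f ∧
      Nonempty (((Fin 3 → ℤ) ⧸ LinearMap.range f) ≃ₗ[ℤ] ℤ × ZMod 4) := by
  intro f
  have hf : ∀ v : Fin 2 → ℤ, f v = ![3 * v 0 - v 1, 2 * v 0 + 2 * v 1, v 0 + v 1] := by
    intro v
    funext i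
    fin_cases i <;>
      simp [f, Matrix.toLin'_apply, Matrix.mulVec, dotProduct, Fin.sum_univ_succ] <;> ring
  constructor
  · intro x y h
    rw [hf, hf] at h
    have h0 := congrFun h 0
    have h2 := congrFun h 2
    simp at h0 h2
    have hx : x 0 = y 0 ∧ x 1 = y 1 := by omega
    funext i
    fin_cases i
    · exact hx.1
    · exact hx.2
  · have hsurj : Function.Surjective gysinAux := by
      rintro ⟨m, r⟩
      refine ⟨![(r.val : ℤ), m, 0], ?_⟩
      simp [gysinAux]
    have hker : LinearMap.ker gysinAux = LinearMap.range f := by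
      apply le_antisymm
      · intro v hv
        simp only [LinearMap.mem_ker, gysinAux, LinearMap.coe_mk, AddHom.coe_mk,
          Prod.mk_eq_zero] at hv
        obtain ⟨h1, h2⟩ := hv
        have h2' : (4 : ℤ) ∣ v 0 + v 2 := by
          have := (ZMod.intCast_zmod_eq_zero_iff_dvd (v 0 + v 2) 4).mp h2
          exact_mod_cast this
        obtain ⟨k, hk⟩ := h2'
        refine ⟨![k, v 2 - k], ?_⟩
        rw [hf]
        funext i
        fin_cases i <;> simp <;> omega
      · rintro _ ⟨v, rfl⟩
        simp only [LinearMap.mem_ker, gysinAux, LinearMap.coe_mk, AddHom.coe_mk]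
        rw [hf]
        refine Prod.ext ?_ ?_
        · show (2 * v 0 + 2 * v 1) - 2 * (v 0 + v 1) = 0
          ring
        · show (((3 * v 0 - v 1 : ℤ) + (v 0 + v 1) : ℤ) : ZMod 4) = 0
          rw [show (3 * v 0 - v 1 : ℤ) + (v 0 + v 1) = 4 * v 0 by ring]
          push_cast
          rw [show (4 : ZMod 4) = 0 by decide, zero_mul]
    exact ⟨(hker ▸ gysinAux.quotKerEquivOfSurjective hsurj : _)⟩
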